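/- Let T be a normal tree (every node has extensions at every higher level below the height of T, and nodes at limit levels are determined by their sets of predecessors) and suppose f : ^{<ω+1}2 → T is a map that is strictly order preserving and preserves incomparability. Then there exists a map g : ^{<ω+1}2 → T that is strictly order preserving, preserves incomparability, preserves meets (g(a ∧ b) = g(a) ∧ g(b) for all a, b), and is continuous at limits: for every x ∈ ^ω2, g(x) is the least upper bound in T of {g(x↾n) | n < ω}. -/

import Mathlib

open Cardinal Set

/-- The tree `^{<ω+1}2` of binary sequences of length at most `ω`: finite sequences
(`List Bool`) together with infinite sequences (`ℕ → Bool`). -/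
abbrev Bt : Type := List Bool ⊕ (ℕ → Bool)

/-- The initial-segment order on `^{<ω+1}2`. -/
def btLE : Bt → Bt → Prop
  | Sum.inl l, Sum.inl l' => l <+: l'
  | Sum.inl l, Sum.inr x => ∀ i : Fin l.length, l.get i = x i.1
  | Sum.inr x, Sum.inr y => x = y
  | Sum.inr _, Sum.inl _ => False

/-- The height of a node `t` of a tree: the order type of its set of strict predecessors. -/
noncomputable def treeHt {T : Type} [PartialOrder T]
    (hwo : ∀ t : T, IsWellOrder {s : T // s < t} fun a b => (a : T) < (b : T)) (t : T) :
    Ordinal :=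
  @Ordinal.type {s : T // s < t} (fun a b => (a : T) < (b : T)) (hwo t)

/-!
Let `m l` be the meet in `T` of the images of the two branches `l ⌢ 0ᵚ` and `l ⌢ 1ᵚ`, and let
`g` send `l` to `m l` and a branch `x` to the supremum of the chain `m (x ↾ n)`.

Both exist by normality. For two nodes with a common lower bound, the least level `δ` without
a common lower bound cannot be a limit: the nodes at level `δ` below each of the two would have
the same predecessors and hence coincide. So the common lower bound one level below `δ` is the
meet. Similarly, the supremum of a bounded increasing `ω`-chain is the node at the limit level
above the chain lying below any upper bound; this node is independent of the upper bound.

Since `f l ≤ m l ≤ f (l ⌢ [i])` for both `i`, the map `m` is strictly increasing, and each value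
of `g` is squeezed between values of `f` on sequences comparable to its argument, so `g`
reflects the order because `f` does. A common lower bound of `g a` and `g b` lies below
`g (l ⌢ [i])` for the bit `i` by which `a` leaves the meet `l` of `a` and `b`, hence below the
branch `l ⌢ iᵚ`. As `b` leaves `l` by the other bit, it lies below both branches, hence below
`m l`.
-/

section Tree

variable {T : Type} [PartialOrder T]
  (hwo : ∀ t : T, IsWellOrder {s : T // s < t} fun a b => (a : T) < (b : T))

include hwo in
theorem isChain_Iic (t : T) : IsChain (· ≤ ·) (Iic t) := by
  intro r (hr : r ≤ t) r' (hr' : r' ≤ t) hne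
  rcases hr.lt_or_eq with hr | rfl
  · rcases hr'.lt_or_eq with hr' | rfl
    · by_contra! h
      exact hne (congrArg Subtype.val
        ((hwo t).trichotomous ⟨r, hr⟩ ⟨r', hr'⟩ (fun h' => h.1 h'.le) (fun h' => h.2 h'.le)))
    · exact Or.inl hr.le
  · exact Or.inr hr'

theorem treeHt_eq_typein {s t : T} (h : s < t) :
    treeHt hwo s =
      @Ordinal.typein {s : T // s < t} (fun a b => (a : T) < (b : T)) (hwo t) ⟨s, h⟩ := by
  let _ := hwo t
  rw [← Ordinal.type_subrel]
  exact Ordinal.type_eq.2 ⟨⟨⟨fun r => ⟨⟨r.1, r.2.trans h⟩, r.2⟩, fun r => ⟨r.1.1, r.2⟩,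
    fun _ => rfl, fun _ => rfl⟩, Iff.rfl⟩⟩

theorem treeHt_strictMono : StrictMono (treeHt hwo) := fun s t h => by
  rw [treeHt_eq_typein hwo h]
  exact @Ordinal.typein_lt_type _ _ (hwo t) _

theorem exists_le_treeHt_eq {t : T} {β : Ordinal} (h : β ≤ treeHt hwo t) :
    ∃ s, s ≤ t ∧ treeHt hwo s = β := by
  rcases h.lt_or_eq with h | rfl
  · let _ := hwo t
    obtain ⟨⟨s, hs⟩, rfl⟩ :=
      @Ordinal.typein_surj {s : T // s < t} (fun a b => (a : T) < (b : T)) (hwo t) _ h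
    exact ⟨s, hs.le, treeHt_eq_typein hwo hs⟩
  · exact ⟨t, le_rfl, rfl⟩

theorem lt_of_treeHt_lt {r s t : T} (hr : r ≤ t) (hs : s ≤ t)
    (h : treeHt hwo r < treeHt hwo s) : r < s := by
  rcases (isChain_Iic hwo t).total hr hs with hrs | hsr
  · exact hrs.lt_of_ne fun hrs => h.ne (congrArg _ hrs)
  · exact absurd ((treeHt_strictMono hwo).monotone hsr) h.not_ge

theorem eq_of_treeHt_eq {r s t : T} (hr : r ≤ t) (hs : s ≤ t)
    (h : treeHt hwo r = treeHt hwo s) : r = s := by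
  rcases (isChain_Iic hwo t).total hr hs with hrs | hsr
  · by_contra hne
    exact ((treeHt_strictMono hwo) (hrs.lt_of_ne hne)).ne h
  · by_contra hne
    exact ((treeHt_strictMono hwo) (hsr.lt_of_ne (Ne.symm hne))).ne h.symm

theorem le_of_treeHt_le {r s t : T} (hr : r ≤ t) (hs : s ≤ t)
    (h : treeHt hwo r ≤ treeHt hwo s) : r ≤ s :=
  h.lt_or_eq.elim (fun h => (lt_of_treeHt_lt hwo hr hs h).le)
    (fun h => (eq_of_treeHt_eq hwo hr hs h).le)

variable (hlim : ∀ s t : T, treeHt hwo s = treeHt hwo t → Order.IsSuccLimit (treeHt hwo s) →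
  (∀ r : T, r < s ↔ r < t) → s = t)

include hlim in
theorem exists_le_le_treeHt_eq_of_isSuccLimit {a b : T} {δ : Ordinal}
    (hδ : Order.IsSuccLimit δ) (ha : δ ≤ treeHt hwo a) (hb : δ ≤ treeHt hwo b)
    (hab : ∀ r, treeHt hwo r < δ → (r < a ↔ r < b)) :
    ∃ s, s ≤ a ∧ s ≤ b ∧ treeHt hwo s = δ := by
  obtain ⟨s, hsa, hs⟩ := exists_le_treeHt_eq hwo ha
  obtain ⟨s', hs'b, hs'⟩ := exists_le_treeHt_eq hwo hb
  have hss' : s = s' := by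
    refine hlim s s' (hs.trans hs'.symm) (hs ▸ hδ) fun r => ⟨fun hr => ?_, fun hr => ?_⟩
    · have hrδ : treeHt hwo r < δ := hs ▸ treeHt_strictMono hwo hr
      exact lt_of_treeHt_lt hwo ((hab r hrδ).1 (hr.trans_le hsa)).le hs'b (hs'.symm ▸ hrδ)
    · have hrδ : treeHt hwo r < δ := hs' ▸ treeHt_strictMono hwo hr
      exact lt_of_treeHt_lt hwo ((hab r hrδ).2 (hr.trans_le hs'b)).le hsa (hs.symm ▸ hrδ)
  exact ⟨s, hsa, hss' ▸ hs'b, hs⟩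

include hlim in
theorem exists_meet {a b r₀ : T} (ha : r₀ ≤ a) (hb : r₀ ≤ b) :
    ∃ m, m ≤ a ∧ m ≤ b ∧ ∀ r, r ≤ a → r ≤ b → r ≤ m := by
  by_cases hab : a ≤ b
  · exact ⟨a, le_rfl, hab, fun _ h _ => h⟩
  by_cases hba : b ≤ a
  · exact ⟨b, hba, le_rfl, fun _ _ h => h⟩
  set S := {β | ¬ ∃ r, r ≤ a ∧ r ≤ b ∧ treeHt hwo r = β}
  have haS : treeHt hwo a ∈ S := fun ⟨r, hra, hrb, hr⟩ =>
    hab (eq_of_treeHt_eq hwo hra le_rfl hr ▸ hrb)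
  have hbS : treeHt hwo b ∈ S := fun ⟨r, hra, hrb, hr⟩ =>
    hba (eq_of_treeHt_eq hwo hrb le_rfl hr ▸ hra)
  set δ := sInf S
  have hδS : δ ∈ S := csInf_mem ⟨_, haS⟩
  have hbelow : ∀ β < δ, ∃ r, r ≤ a ∧ r ≤ b ∧ treeHt hwo r = β := fun β hβ =>
    not_not.1 (notMem_of_lt_csInf' hβ)
  have hlow : ∀ r, r ≤ a → r ≤ b → treeHt hwo r < δ := fun r hra hrb => by
    by_contra! h
    obtain ⟨s, hsr, hs⟩ := exists_le_treeHt_eq hwo h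
    exact hδS ⟨s, hsr.trans hra, hsr.trans hrb, hs⟩
  rcases Ordinal.zero_or_succ_or_isSuccLimit δ with h0 | ⟨β, hβ⟩ | hδ
  · exact (zero_le.not_gt (h0 ▸ hlow r₀ ha hb)).elim
  · obtain ⟨m, hma, hmb, hm⟩ := hbelow β (hβ ▸ Order.lt_succ β)
    refine ⟨m, hma, hmb, fun r hra hrb => le_of_treeHt_le hwo hra hma ?_⟩
    exact hm ▸ Order.lt_succ_iff.1 (hβ ▸ hlow r hra hrb)
  · refine absurd ?_ hδS
    refine exists_le_le_treeHt_eq_of_isSuccLimit hwo hlim hδ (csInf_le' haS) (csInf_le' hbS)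
      fun r hr => ?_
    obtain ⟨r', hr'a, hr'b, hr'⟩ := hbelow _ (hδ.succ_lt hr)
    have hrr' : treeHt hwo r < treeHt hwo r' := hr' ▸ Order.lt_succ _
    exact ⟨fun hra => (lt_of_treeHt_lt hwo hra.le hr'a hrr').trans_le hr'b,
      fun hrb => (lt_of_treeHt_lt hwo hrb.le hr'b hrr').trans_le hr'a⟩

include hlim in
theorem exists_isLUB_of_strictMono {c : ℕ → T} (hc : StrictMono c) {v : T}
    (hv : ∀ n, c n < v) : ∃ m, m ≤ v ∧ IsLUB (range c) m := by
  set S := {β | ∀ n, treeHt hwo (c n) < β}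
  have hvS : treeHt hwo v ∈ S := fun n => treeHt_strictMono hwo (hv n)
  set δ := sInf S
  have hδS : δ ∈ S := csInf_mem ⟨_, hvS⟩
  have hbelow : ∀ β < δ, ∃ n, β ≤ treeHt hwo (c n) := fun β hβ => by
    simpa [S] using notMem_of_lt_csInf' hβ
  have hδ : Order.IsSuccLimit δ := by
    refine Ordinal.isSuccLimit_iff.2 ⟨(zero_le.trans_lt (hδS 0)).ne',
      Order.isSuccPrelimit_iff_succ_lt.2 fun β hβ => ?_⟩
    obtain ⟨n, hn⟩ := hbelow β hβ
    exact (Order.succ_le_of_lt (hn.trans_lt (treeHt_strictMono hwo (hc n.lt_succ_self)))).trans_lt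
      (hδS (n + 1))
  obtain ⟨m, hmv, hm⟩ := exists_le_treeHt_eq hwo (csInf_le' hvS)
  have hcm : ∀ n, c n < m := fun n => lt_of_treeHt_lt hwo (hv n).le hmv (hm ▸ hδS n)
  refine ⟨m, hmv, forall_mem_range.2 fun n => (hcm n).le, fun u hu => ?_⟩
  have hcu : ∀ n, c n < u := fun n => (hc n.lt_succ_self).trans_le (hu ⟨n + 1, rfl⟩)
  obtain ⟨s, hsv, hsu, hs⟩ := exists_le_le_treeHt_eq_of_isSuccLimit hwo hlim hδ
    (csInf_le' hvS) (csInf_le' fun n => treeHt_strictMono hwo (hcu n)) fun r hr => by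
      obtain ⟨n, hn⟩ := hbelow _ hr
      have hrn : treeHt hwo r < treeHt hwo (c (n + 1)) :=
        hn.trans_lt (treeHt_strictMono hwo (hc n.lt_succ_self))
      exact ⟨fun hrv => (lt_of_treeHt_lt hwo hrv.le (hv _).le hrn).trans (hcu _),
        fun hru => (lt_of_treeHt_lt hwo hru.le (hcu _).le hrn).trans (hv _)⟩
  exact eq_of_treeHt_eq hwo hmv hsv (hm.trans hs.symm) ▸ hsu

end Tree

section BinarySequences

open Sum

/-- `extendConst l i` is the infinite branch `l ⌢ iᵚ`. -/
def extendConst (l : List Bool) (i : Bool) : ℕ → Bool := fun n => l.getD n i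

/-- `initSeg x n` is the restriction `x ↾ n`. -/
def initSeg (x : ℕ → Bool) (n : ℕ) : List Bool := List.ofFn fun i : Fin n => x i.1

@[simp] theorem length_initSeg (x : ℕ → Bool) (n : ℕ) : (initSeg x n).length = n := by
  simp [initSeg]

@[simp] theorem getElem_initSeg (x : ℕ → Bool) (n : ℕ) {k : ℕ} (hk : k < (initSeg x n).length) :
    (initSeg x n)[k] = x k := by
  simp [initSeg]

theorem initSeg_succ (x : ℕ → Bool) (n : ℕ) : initSeg x (n + 1) = initSeg x n ++ [x n] :=
  List.ofFn_succ_last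

theorem btLE_inl_inr {l : List Bool} {x : ℕ → Bool} :
    btLE (inl l) (inr x) ↔ ∀ k (hk : k < l.length), l[k] = x k :=
  ⟨fun h k hk => h ⟨k, hk⟩, fun h k => h k.1 k.2⟩

theorem not_btLE_inr_inl {x : ℕ → Bool} {l : List Bool} : ¬ btLE (inr x) (inl l) := id

theorem eq_of_inr_btLE {x : ℕ → Bool} {u : Bt} (h : btLE (inr x) u) : u = inr x := by
  match u with
  | inl _ => exact absurd h not_btLE_inr_inl
  | inr _ => exact congrArg inr (h : _ = _).symm

theorem btLE_refl (s : Bt) : btLE s s := by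
  cases s with
  | inl l => exact List.prefix_refl l
  | inr x => exact rfl

theorem btLE_trans {s t u : Bt} (hst : btLE s t) (htu : btLE t u) : btLE s u := by
  match s, t, u with
  | inl _, inl _, inl _ => exact List.IsPrefix.trans hst htu
  | inl _, inl _, inr _ =>
    rw [btLE_inl_inr] at htu ⊢
    exact fun k hk => (hst.getElem hk).trans (htu k _)
  | inl _, inr _, inr _ => exact (htu : _ = _) ▸ hst
  | inr _, inr _, inr _ => exact (hst : _ = _).trans htu
  | inr _, inl _, _ => exact absurd hst not_btLE_inr_inl
  | _, inr _, inl _ => exact absurd htu not_btLE_inr_inl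

theorem btLE_antisymm {s t : Bt} (hst : btLE s t) (hts : btLE t s) : s = t := by
  match s, t with
  | inl _, inl _ => exact congrArg inl (hst.eq_of_length (hst.length_le.antisymm hts.length_le))
  | inr _, inr _ => exact congrArg inr hst
  | inl _, inr _ => exact absurd hts not_btLE_inr_inl
  | inr _, inl _ => exact absurd hst not_btLE_inr_inl

theorem btLE_initSeg (x : ℕ → Bool) (n : ℕ) : btLE (inl (initSeg x n)) (inr x) :=
  btLE_inl_inr.2 fun _ _ => getElem_initSeg ..

theorem initSeg_length_of_btLE {l : List Bool} {x : ℕ → Bool} (h : btLE (inl l) (inr x)) :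
    initSeg x l.length = l :=
  List.ext_getElem (length_initSeg ..) fun k _ hk =>
    ((btLE_inl_inr.1 h) k hk).symm ▸ getElem_initSeg ..

theorem eq_of_forall_btLE_initSeg {x y : ℕ → Bool} (h : ∀ n, btLE (inl (initSeg x n)) (inr y)) :
    x = y :=
  funext fun k => by simpa using btLE_inl_inr.1 (h (k + 1)) k (by simp)

theorem btLE_extendConst (l : List Bool) (i : Bool) : btLE (inl l) (inr (extendConst l i)) :=
  btLE_inl_inr.2 fun _ hk => (List.getD_eq_getElem _ _ hk).symm

theorem extendConst_append_singleton (l : List Bool) (i : Bool) :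
    extendConst (l ++ [i]) i = extendConst l i := by
  funext n
  rcases lt_or_ge n l.length with h | h
  · exact List.getD_append _ _ _ _ h
  · rw [extendConst, List.getD_append_right _ _ _ _ h, extendConst, List.getD_eq_default _ _ h]
    simp

theorem extendConst_length (l : List Bool) (i : Bool) : extendConst l i l.length = i :=
  List.getD_eq_default _ _ le_rfl

theorem extendConst_false_ne_true (l : List Bool) : extendConst l false ≠ extendConst l true :=
  fun h => by simpa [extendConst_length] using congrFun h l.length

theorem not_btLE_append_extendConst {l : List Bool} {i j : Bool} (h : i ≠ j) :
    ¬ btLE (inl (l ++ [i])) (inr (extendConst l j)) := fun hle =>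
  h (by simpa [extendConst_length] using btLE_inl_inr.1 hle l.length (by simp))

theorem eq_of_append_btLE_append {l : List Bool} {i j : Bool}
    (h : btLE (inl (l ++ [i])) (inl (l ++ [j]))) : i = j := by
  simpa using (List.prefix_append_right_inj l).1 h

theorem not_append_btLE_self (l : List Bool) (i : Bool) : ¬ btLE (inl (l ++ [i])) (inl l) :=
  fun h => by simpa using h.length_le

theorem exists_append_btLE {l : List Bool} {u : Bt} (hu : btLE (inl l) u) (hne : u ≠ inl l) :
    ∃ i, btLE (inl (l ++ [i])) u := by
  match u with
  | inl l' =>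
    have hlen : l.length < l'.length :=
      hu.length_le.lt_of_ne fun h => hne (congrArg inl (hu.eq_of_length h).symm)
    refine ⟨l'[l.length], ?_⟩
    have : l ++ [l'[l.length]] = l'.take (l.length + 1) := by
      rw [List.take_add_one, ← List.prefix_iff_eq_take.1 hu, List.getElem?_eq_getElem hlen]
      rfl
    exact this ▸ List.take_prefix _ _
  | inr x =>
    refine ⟨x l.length, btLE_inl_inr.2 fun k hk => ?_⟩
    rw [List.getElem_append]
    split_ifs with hkl
    · exact btLE_inl_inr.1 hu k hkl
    · obtain rfl : k = l.length := by simp at hk; omega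
      simp

theorem prefix_of_forall_btLE_extendConst {l l' : List Bool}
    (h : ∀ i, btLE (inl l) (inr (extendConst l' i))) : l <+: l' := by
  have hget := fun i => btLE_inl_inr.1 (h i)
  by_cases hlen : l.length ≤ l'.length
  · refine List.prefix_iff_getElem.2 ⟨hlen, fun k hk => ?_⟩
    rw [hget false k hk, extendConst, List.getD_eq_getElem]
  · have := (hget false _ (not_le.1 hlen)).symm.trans (hget true _ (not_le.1 hlen))
    simp [extendConst_length] at this

end BinarySequences

structure IsTreeEmbedding {T : Type} [PartialOrder T] (f : Bt → T) : Prop where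
  lt : ∀ s t : Bt, btLE s t → s ≠ t → f s < f t
  incomparable : ∀ s t : Bt, ¬ btLE s t → ¬ btLE t s → ¬ (f s ≤ f t) ∧ ¬ (f t ≤ f s)

namespace IsTreeEmbedding

variable {T : Type} [PartialOrder T] {f : Bt → T}

theorem monotone (hf : IsTreeEmbedding f) {s t : Bt} (h : btLE s t) : f s ≤ f t := by
  rcases eq_or_ne s t with rfl | hne
  · exact le_rfl
  · exact (hf.lt s t h hne).le

theorem btLE_of_le (hf : IsTreeEmbedding f) {s t : Bt} (h : f s ≤ f t) : btLE s t := by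
  by_contra hst
  by_cases hts : btLE t s
  · exact (hf.lt t s hts fun hts => hst (hts ▸ btLE_refl t)).not_ge h
  · exact (hf.incomparable s t hst hts).1 h

theorem of_btLE_of_le (hlt : ∀ s t, btLE s t → s ≠ t → f s < f t)
    (hle : ∀ s t, f s ≤ f t → btLE s t) : IsTreeEmbedding f :=
  ⟨hlt, fun s t hst hts => ⟨mt (hle s t) hst, mt (hle t s) hts⟩⟩

end IsTreeEmbedding

section Construction

open Sum

variable {T : Type} [PartialOrder T] {f : Bt → T} {m : List Bool → T} {M : (ℕ → Bool) → T}

def IsBranchMeet (f : Bt → T) (m : List Bool → T) : Prop :=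
  ∀ l, (∀ i, m l ≤ f (inr (extendConst l i))) ∧
    ∀ r, (∀ i, r ≤ f (inr (extendConst l i))) → r ≤ m l

namespace IsBranchMeet

theorem le_apply_extendConst (hm : IsBranchMeet f m) (l : List Bool) (i : Bool) :
    m l ≤ f (inr (extendConst l i)) :=
  (hm l).1 i

theorem le_of_forall_le (hm : IsBranchMeet f m) {l : List Bool} {r : T}
    (h : ∀ i, r ≤ f (inr (extendConst l i))) : r ≤ m l :=
  (hm l).2 r h

theorem apply_inl_le (hf : IsTreeEmbedding f) (hm : IsBranchMeet f m) (l : List Bool) :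
    f (inl l) ≤ m l :=
  hm.le_of_forall_le fun i => hf.monotone (btLE_extendConst l i)

variable (hT : ∀ t : T, IsChain (· ≤ ·) (Iic t))
include hT

theorem le_apply_append (hf : IsTreeEmbedding f) (hm : IsBranchMeet f m) (l : List Bool)
    (i : Bool) : m l ≤ f (inl (l ++ [i])) := by
  have hbranch : f (inl (l ++ [i])) ≤ f (inr (extendConst l i)) :=
    extendConst_append_singleton l i ▸ hf.monotone (btLE_extendConst _ i)
  refine ((hT _).total (hm.le_apply_extendConst l i) hbranch).resolve_right fun hle => ?_
  exact not_btLE_append_extendConst (Bool.not_ne_self i).symm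
    (hf.btLE_of_le (hle.trans (hm.le_apply_extendConst l (!i))))

theorem lt_apply_of_btLE (hf : IsTreeEmbedding f) (hm : IsBranchMeet f m) {l : List Bool}
    {u : Bt} (hu : btLE (inl l) u) (hne : u ≠ inl l) : m l < f u := by
  obtain ⟨i, hi⟩ := exists_append_btLE hu hne
  refine ((hm.le_apply_append hT hf l i).trans (hf.monotone hi)).lt_of_ne fun heq => ?_
  have hu' : btLE u (inl (l ++ [!i])) := hf.btLE_of_le (heq ▸ hm.le_apply_append hT hf l (!i))
  exact Bool.not_ne_self i (eq_of_append_btLE_append (btLE_trans hi hu')).symm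

theorem lt_of_prefix (hf : IsTreeEmbedding f) (hm : IsBranchMeet f m) {l l' : List Bool}
    (h : l <+: l') (hne : l ≠ l') : m l < m l' :=
  (hm.lt_apply_of_btLE hT hf (u := inl l') h fun h' => hne (inl.inj h').symm).trans_le
    (hm.apply_inl_le hf l')

theorem strictMono_initSeg (hf : IsTreeEmbedding f) (hm : IsBranchMeet f m) (x : ℕ → Bool) :
    StrictMono fun n => m (initSeg x n) :=
  strictMono_nat_of_lt_succ fun n => by
    simpa only [initSeg_succ] using hm.lt_of_prefix hT hf (List.prefix_append _ [x n]) (by simp)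

end IsBranchMeet

theorem elim_lt_elim (hT : ∀ t : T, IsChain (· ≤ ·) (Iic t)) (hf : IsTreeEmbedding f)
    (hm : IsBranchMeet f m) (hM : ∀ x, IsLUB (range fun n => m (initSeg x n)) (M x))
    {s t : Bt} (hst : btLE s t) (hne : s ≠ t) : Sum.elim m M s < Sum.elim m M t := by
  match s, t with
  | inl l, inl l' => exact hm.lt_of_prefix hT hf hst fun h => hne (congrArg inl h)
  | inl l, inr x =>
    show m l < M x
    rw [← initSeg_length_of_btLE hst]
    exact (hm.strictMono_initSeg hT hf x l.length.lt_succ_self).trans_le ((hM x).1 ⟨_, rfl⟩)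
  | inr _, inr _ => exact absurd (congrArg inr hst) hne
  | inr _, inl _ => exact absurd hst not_btLE_inr_inl

theorem btLE_of_elim_le (hf : IsTreeEmbedding f) (hm : IsBranchMeet f m)
    (hMf : ∀ x, M x ≤ f (inr x)) (hM : ∀ x, IsLUB (range fun n => m (initSeg x n)) (M x))
    {s t : Bt} (h : Sum.elim m M s ≤ Sum.elim m M t) : btLE s t := by
  have hinitSeg : ∀ x n, f (inl (initSeg x n)) ≤ M x := fun x n =>
    (hm.apply_inl_le hf _).trans ((hM x).1 ⟨n, rfl⟩)
  match s, t with
  | inl l, inl l' =>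
    exact prefix_of_forall_btLE_extendConst fun i =>
      hf.btLE_of_le ((hm.apply_inl_le hf l).trans (h.trans (hm.le_apply_extendConst l' i)))
  | inl l, inr x => exact hf.btLE_of_le ((hm.apply_inl_le hf l).trans (h.trans (hMf x)))
  | inr x, inl l =>
    have hbranch : ∀ i, x = extendConst l i := fun i => eq_of_forall_btLE_initSeg fun n =>
      hf.btLE_of_le ((hinitSeg x n).trans (h.trans (hm.le_apply_extendConst l i)))
    exact absurd ((hbranch false).symm.trans (hbranch true)) (extendConst_false_ne_true l)
  | inr x, inr y =>
    exact eq_of_forall_btLE_initSeg fun n => hf.btLE_of_le ((hinitSeg x n).trans (h.trans (hMf y)))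

theorem isTreeEmbedding_elim (hT : ∀ t : T, IsChain (· ≤ ·) (Iic t)) (hf : IsTreeEmbedding f)
    (hm : IsBranchMeet f m) (hMf : ∀ x, M x ≤ f (inr x))
    (hM : ∀ x, IsLUB (range fun n => m (initSeg x n)) (M x)) :
    IsTreeEmbedding (Sum.elim m M) :=
  .of_btLE_of_le (fun _ _ => elim_lt_elim hT hf hm hM) (fun _ _ => btLE_of_elim_le hf hm hMf hM)

variable (hT : ∀ t : T, IsChain (· ≤ ·) (Iic t)) (hm : IsBranchMeet f m)
  (hg : IsTreeEmbedding (Sum.elim m M))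
include hT hm hg

theorem le_apply_extendConst_of_le_elim {l : List Bool} {k : Bool} {a b : Bt} {r : T}
    (ha : btLE (inl (l ++ [k])) a) (hb : ¬ btLE (inl (l ++ [k])) b)
    (hra : r ≤ Sum.elim m M a) (hrb : r ≤ Sum.elim m M b) : r ≤ f (inr (extendConst l k)) := by
  rcases (hT _).total hra (hg.monotone ha) with hr | hr
  · calc r ≤ m (l ++ [k]) := hr
      _ ≤ f (inr (extendConst (l ++ [k]) k)) := hm.le_apply_extendConst _ k
      _ = f (inr (extendConst l k)) := by rw [extendConst_append_singleton]
  · exact absurd (hg.btLE_of_le (hr.trans hrb)) hb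

theorem elim_le_of_isMeet {a b c : Bt}
    (hc : btLE c a ∧ btLE c b ∧ ∀ r : Bt, btLE r a → btLE r b → btLE r c) {r : T}
    (hra : r ≤ Sum.elim m M a) (hrb : r ≤ Sum.elim m M b) : r ≤ Sum.elim m M c := by
  obtain ⟨hca, hcb, hmax⟩ := hc
  by_cases hab : btLE a b
  · exact btLE_antisymm hca (hmax a (btLE_refl a) hab) ▸ hra
  by_cases hba : btLE b a
  · exact btLE_antisymm hcb (hmax b hba (btLE_refl b)) ▸ hrb
  obtain ⟨l, rfl⟩ : ∃ l, c = inl l := by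
    match c with
    | inl l => exact ⟨l, rfl⟩
    | inr _ => exact absurd (eq_of_inr_btLE hcb ▸ eq_of_inr_btLE hca ▸ btLE_refl a) hab
  obtain ⟨i, hi⟩ := exists_append_btLE hca fun h => hab (h ▸ hcb)
  obtain ⟨j, hj⟩ := exists_append_btLE hcb fun h => hba (h ▸ hca)
  have hib : ¬ btLE (inl (l ++ [i])) b := fun h => not_append_btLE_self l i (hmax _ hi h)
  have hja : ¬ btLE (inl (l ++ [j])) a := fun h => not_append_btLE_self l j (hmax _ h hj)
  have hij : i ≠ j := fun h => hib (h ▸ hj)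
  refine hm.le_of_forall_le fun k => ?_
  obtain rfl | rfl : k = i ∨ k = j := by cases i <;> cases j <;> cases k <;> simp_all
  · exact le_apply_extendConst_of_le_elim hT hm hg hi hib hra hrb
  · exact le_apply_extendConst_of_le_elim hT hm hg hj hja hrb hra

end Construction

theorem statement5_general (T : Type) [PartialOrder T]
    (hwo : ∀ t : T, IsWellOrder {s : T // s < t} fun a b => (a : T) < (b : T))
    -- normality: nodes at limit levels are determined by their sets of predecessors
    (hlim : ∀ s t : T, treeHt hwo s = treeHt hwo t → Order.IsSuccLimit (treeHt hwo s) →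
      (∀ r : T, r < s ↔ r < t) → s = t)
    (f : Bt → T)
    (hf₁ : ∀ s t : Bt, btLE s t → s ≠ t → f s < f t)
    (hf₂ : ∀ s t : Bt, ¬ btLE s t → ¬ btLE t s → ¬ (f s ≤ f t) ∧ ¬ (f t ≤ f s)) :
    ∃ g : Bt → T,
      (∀ s t : Bt, btLE s t → s ≠ t → g s < g t) ∧
      (∀ s t : Bt, ¬ btLE s t → ¬ btLE t s → ¬ (g s ≤ g t) ∧ ¬ (g t ≤ g s)) ∧
      -- `g` preserves meets: if `c` is the meet of `a` and `b` then `g c` is the meet of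
      -- `g a` and `g b`
      (∀ a b c : Bt,
        (btLE c a ∧ btLE c b ∧ ∀ r : Bt, btLE r a → btLE r b → btLE r c) →
        (g c ≤ g a ∧ g c ≤ g b ∧ ∀ r : T, r ≤ g a → r ≤ g b → r ≤ g c)) ∧
      -- `g` is continuous at limits
      (∀ x : ℕ → Bool,
        IsLUB {t : T | ∃ n : ℕ, t = g (Sum.inl (List.ofFn fun i : Fin n => x i.1))}
          (g (Sum.inr x))) := by
  have hT := isChain_Iic hwo
  have hf : IsTreeEmbedding f := ⟨hf₁, hf₂⟩
  choose m hm₀ hm₁ hmax using fun l => exists_meet hwo hlim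
    (hf.monotone (btLE_extendConst l false)) (hf.monotone (btLE_extendConst l true))
  have hm : IsBranchMeet f m := fun l =>
    ⟨Bool.forall_bool.2 ⟨hm₀ l, hm₁ l⟩, fun r hr => hmax l r (hr false) (hr true)⟩
  choose M hMf hM using fun x => exists_isLUB_of_strictMono hwo hlim
    (hm.strictMono_initSeg hT hf x) fun n =>
      hm.lt_apply_of_btLE hT hf (btLE_initSeg x n) Sum.inr_ne_inl
  have hg := isTreeEmbedding_elim hT hf hm hMf hM
  refine ⟨Sum.elim m M, hg.lt, hg.incomparable, fun a b c hc => ?_, fun x => ?_⟩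
  · exact ⟨hg.monotone hc.1, hg.monotone hc.2.1, fun r => elim_le_of_isMeet hT hm hg hc⟩
  · show IsLUB _ (M x)
    convert hM x using 1
    ext
    simp [initSeg, eq_comm]

/-- Let `T` be a normal tree and `f : ^{<ω+1}2 → T` an isomorphic
embedding (strictly order preserving and incomparability preserving).  Then there is an
isomorphic embedding `g : ^{<ω+1}2 → T` that moreover preserves meets and is continuous
at limits: for `x ∈ ^ω2`, `g x` is the least upper bound of `{g (x↾n) | n < ω}`. -/
theorem statement5 (T : Type) [PartialOrder T]
    (hwo : ∀ t : T, IsWellOrder {s : T // s < t} fun a b => (a : T) < (b : T))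
    -- normality: every node has extensions at every higher nonempty level
    (hext : ∀ s : T, ∀ β : Ordinal, treeHt hwo s < β → (∃ t : T, treeHt hwo t = β) →
      ∃ t : T, treeHt hwo t = β ∧ s < t)
    -- normality: nodes at limit levels are determined by their sets of predecessors
    (hlim : ∀ s t : T, treeHt hwo s = treeHt hwo t → Order.IsSuccLimit (treeHt hwo s) →
      (∀ r : T, r < s ↔ r < t) → s = t)
    (f : Bt → T)
    (hf₁ : ∀ s t : Bt, btLE s t → s ≠ t → f s < f t)
    (hf₂ : ∀ s t : Bt, ¬ btLE s t → ¬ btLE t s → ¬ (f s ≤ f t) ∧ ¬ (f t ≤ f s)) :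
    ∃ g : Bt → T,
      (∀ s t : Bt, btLE s t → s ≠ t → g s < g t) ∧
      (∀ s t : Bt, ¬ btLE s t → ¬ btLE t s → ¬ (g s ≤ g t) ∧ ¬ (g t ≤ g s)) ∧
      -- `g` preserves meets: if `c` is the meet of `a` and `b` then `g c` is the meet of
      -- `g a` and `g b`
      (∀ a b c : Bt,
        (btLE c a ∧ btLE c b ∧ ∀ r : Bt, btLE r a → btLE r b → btLE r c) →
        (g c ≤ g a ∧ g c ≤ g b ∧ ∀ r : T, r ≤ g a → r ≤ g b → r ≤ g c)) ∧
      -- `g` is continuous at limits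
      (∀ x : ℕ → Bool,
        IsLUB {t : T | ∃ n : ℕ, t = g (Sum.inl (List.ofFn fun i : Fin n => x i.1))}
          (g (Sum.inr x))) :=
  statement5_general T hwo hlim f hf₁ hf₂
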